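/- arXiv:1406.6010 — 5 statements merged into one kernel-verified Lean document; each statement's English description precedes it below -/
import Mathlib

section
/- Let V, V' ⊆ {1,…,N} be nonempty with V ∩ V' = ∅, let a ∈ 𝔸_V, a' ∈ 𝔸_{V'}, and let c ∈ ℝ^N have strictly positive entries. Then N^eff(a+a',c) ≤ N^eff(a,c) + N^eff(a',c), with equality if and only if (∑_{j∈V} c^j)/N^eff(a,c) = (∑_{j∈V'} c^j)/N^eff(a',c). -/
open Finset

/-- Membership in `𝔸_V`: nonnegative `N × N` matrices supported on `V × V` whose
rows and columns indexed by `V` sum to one. -/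
def memA {N : ℕ} (V : Finset (Fin N)) (a : Matrix (Fin N) (Fin N) ℝ) : Prop :=
  (∀ i j, 0 ≤ a i j) ∧
  (∀ i j, (i ∉ V ∨ j ∉ V) → a i j = 0) ∧
  (∀ i ∈ V, ∑ j, a i j = 1) ∧
  (∀ j ∈ V, ∑ i, a i j = 1)

/-- The effective sample size `N^eff(a, c)`. -/
noncomputable def Neff {N : ℕ} (a : Matrix (Fin N) (Fin N) ℝ) (c : Fin N → ℝ) : ℝ :=
  (∑ i, ∑ j, a i j * c j) ^ 2 / (∑ i, (∑ j, a i j * c j) ^ 2)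

/-! Writing `r = a *ᵥ c`, `N^eff(a, c) = S² / Q` with `S = ∑ r i = ∑_{j ∈ V} c j` and
`Q = ∑ (r i)²`. For `a ∈ 𝔸_V`, `a' ∈ 𝔸_{V'}` with `V ∩ V' = ∅` the vectors `a *ᵥ c` and
`a' *ᵥ c` have disjoint supports, so both `S` and `Q` are additive, and the theorem reduces to
`(S + S')² / (Q + Q') ≤ S² / Q + S'² / Q'`, whose defect is `(S Q' - S' Q)² / (Q Q' (Q + Q'))`.
The equality condition `S Q' = S' Q` reads `Q / S = Q' / S'`, and `Q / S = S / N^eff(a, c)`. -/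

open Matrix

section TwoTermTitu

variable {S S' Q Q' : ℝ}

lemma sq_div_add_sq_div_sub_add_sq_div_add (hQ : Q ≠ 0) (hQ' : Q' ≠ 0) (hQQ' : Q + Q' ≠ 0) :
    S ^ 2 / Q + S' ^ 2 / Q' - (S + S') ^ 2 / (Q + Q') =
      (S * Q' - S' * Q) ^ 2 / (Q * Q' * (Q + Q')) := by
  field_simp
  ring

lemma add_sq_div_add_le (hQ : 0 < Q) (hQ' : 0 < Q') :
    (S + S') ^ 2 / (Q + Q') ≤ S ^ 2 / Q + S' ^ 2 / Q' := by
  have h := sq_div_add_sq_div_sub_add_sq_div_add (S := S) (S' := S') hQ.ne' hQ'.ne'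
    (add_pos hQ hQ').ne'
  have : 0 ≤ (S * Q' - S' * Q) ^ 2 / (Q * Q' * (Q + Q')) := by positivity
  linarith

lemma add_sq_div_add_eq_iff (hQ : 0 < Q) (hQ' : 0 < Q') :
    (S + S') ^ 2 / (Q + Q') = S ^ 2 / Q + S' ^ 2 / Q' ↔ S * Q' = S' * Q := by
  have h := sq_div_add_sq_div_sub_add_sq_div_add (S := S) (S' := S') hQ.ne' hQ'.ne'
    (add_pos hQ hQ').ne'
  have hden : Q * Q' * (Q + Q') ≠ 0 := by positivity
  have hdefect : (S * Q' - S' * Q) ^ 2 / (Q * Q' * (Q + Q')) = 0 ↔ S * Q' = S' * Q := by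
    rw [div_eq_zero_iff, or_iff_left hden, pow_eq_zero_iff two_ne_zero, sub_eq_zero]
  rw [← hdefect, ← h, sub_eq_zero, eq_comm]

end TwoTermTitu

lemma sum_sq_pos_of_sum_ne_zero {ι : Type*} {s : Finset ι} {f : ι → ℝ} (h : ∑ i ∈ s, f i ≠ 0) :
    0 < ∑ i ∈ s, f i ^ 2 := by
  refine (sum_nonneg fun i _ => sq_nonneg (f i)).lt_of_ne fun h0 => h ?_
  rw [eq_comm, sum_eq_zero_iff_of_nonneg fun i _ => sq_nonneg (f i)] at h0
  exact sum_eq_zero fun i hi => pow_eq_zero_iff two_ne_zero |>.mp (h0 i hi)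

lemma sum_add_sq_of_mul_eq_zero {ι : Type*} {s : Finset ι} {f g : ι → ℝ}
    (h : ∀ i, f i * g i = 0) :
    ∑ i ∈ s, (f i + g i) ^ 2 = ∑ i ∈ s, f i ^ 2 + ∑ i ∈ s, g i ^ 2 := by
  rw [← sum_add_distrib]
  refine sum_congr rfl fun i _ => ?_
  linear_combination 2 * h i

lemma Neff_eq {N : ℕ} (a : Matrix (Fin N) (Fin N) ℝ) (c : Fin N → ℝ) :
    Neff a c = (∑ i, (a *ᵥ c) i) ^ 2 / ∑ i, (a *ᵥ c) i ^ 2 :=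
  rfl

namespace memA

variable {N : ℕ} {V : Finset (Fin N)} {a : Matrix (Fin N) (Fin N) ℝ}

lemma mulVec_apply_eq_zero (ha : memA V a) (c : Fin N → ℝ) {i : Fin N} (hi : i ∉ V) :
    (a *ᵥ c) i = 0 :=
  show ∑ j, a i j * c j = 0 from sum_eq_zero fun j _ => by rw [ha.2.1 i j (Or.inl hi), zero_mul]

lemma sum_mulVec (ha : memA V a) (c : Fin N → ℝ) : ∑ i, (a *ᵥ c) i = ∑ j ∈ V, c j := by
  have hcol (j : Fin N) : ∑ i, a i j * c j = if j ∈ V then c j else 0 := by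
    rw [← sum_mul]
    split_ifs with hj
    · rw [ha.2.2.2 j hj, one_mul]
    · rw [sum_eq_zero fun i _ => ha.2.1 i j (Or.inr hj), zero_mul]
  simp only [Matrix.mulVec, dotProduct]
  rw [sum_comm, sum_congr rfl fun j _ => hcol j, sum_ite_mem, univ_inter]

lemma mulVec_mul_mulVec_eq_zero {V' : Finset (Fin N)} {a' : Matrix (Fin N) (Fin N) ℝ}
    (ha : memA V a) (ha' : memA V' a') (hdisj : Disjoint V V') (c : Fin N → ℝ) (i : Fin N) :
    (a *ᵥ c) i * (a' *ᵥ c) i = 0 := by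
  by_cases hi : i ∈ V
  · rw [ha'.mulVec_apply_eq_zero c (disjoint_left.mp hdisj hi), mul_zero]
  · rw [ha.mulVec_apply_eq_zero c hi, zero_mul]

end memA

theorem stmt_4_general {N : ℕ} (V V' : Finset (Fin N))
    (hV : V.Nonempty) (hV' : V'.Nonempty) (hdisj : Disjoint V V')
    (a a' : Matrix (Fin N) (Fin N) ℝ) (ha : memA V a) (ha' : memA V' a')
    (c : Fin N → ℝ) (hc : ∀ j, 0 < c j) :
    Neff (a + a') c ≤ Neff a c + Neff a' c ∧
    (Neff (a + a') c = Neff a c + Neff a' c ↔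
      (∑ j ∈ V, c j) / Neff a c = (∑ j ∈ V', c j) / Neff a' c) := by
  have hS : 0 < ∑ j ∈ V, c j := sum_pos (fun j _ => hc j) hV
  have hS' : 0 < ∑ j ∈ V', c j := sum_pos (fun j _ => hc j) hV'
  have hQ := sum_sq_pos_of_sum_ne_zero (s := univ) ((ha.sum_mulVec c).trans_ne hS.ne')
  have hQ' := sum_sq_pos_of_sum_ne_zero (s := univ) ((ha'.sum_mulVec c).trans_ne hS'.ne')
  have hadd : Neff (a + a') c =
      (∑ j ∈ V, c j + ∑ j ∈ V', c j) ^ 2 / (∑ i, (a *ᵥ c) i ^ 2 + ∑ i, (a' *ᵥ c) i ^ 2) := by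
    rw [Neff_eq, Matrix.add_mulVec]
    simp only [Pi.add_apply]
    rw [sum_add_distrib, ha.sum_mulVec, ha'.sum_mulVec,
      sum_add_sq_of_mul_eq_zero (ha.mulVec_mul_mulVec_eq_zero ha' hdisj c)]
  have hdiv {S Q : ℝ} (hS : S ≠ 0) : S / (S ^ 2 / Q) = Q / S := by field_simp
  rw [hadd, Neff_eq a, Neff_eq a', ha.sum_mulVec, ha'.sum_mulVec, hdiv hS.ne', hdiv hS'.ne',
    div_eq_div_iff hS.ne' hS'.ne', add_sq_div_add_eq_iff hQ hQ']
  exact ⟨add_sq_div_add_le hQ hQ', by constructor <;> intro h <;> linarith⟩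

theorem stmt_4 {N : ℕ} (hN : 1 ≤ N) (V V' : Finset (Fin N))
    (hV : V.Nonempty) (hV' : V'.Nonempty) (hdisj : Disjoint V V')
    (a a' : Matrix (Fin N) (Fin N) ℝ) (ha : memA V a) (ha' : memA V' a')
    (c : Fin N → ℝ) (hc : ∀ j, 0 < c j) :
    Neff (a + a') c ≤ Neff a c + Neff a' c ∧
    (Neff (a + a') c = Neff a c + Neff a' c ↔
      (∑ j ∈ V, c j) / Neff a c = (∑ j ∈ V', c j) / Neff a' c) :=
  stmt_4_general V V' hV hV' hdisj a a' ha ha' c hc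
end

section
/- Let P = {V_1,…,V_K} and P̃ = {Ṽ_1,…,Ṽ_L} each be collections of nonempty pairwise disjoint subsets of {1,…,N} with ⋃_k V_k = ⋃_l Ṽ_l, and suppose P refines P̃, i.e. every V_k is contained in some Ṽ_l. Then for every c ∈ ℝ^N with strictly positive entries, N^eff(P,c) ≤ N^eff(P̃,c). -/
open Finset

/-- The partition effective sample size `N^eff(P, c)` for `P = {V_1, …, V_K}`. -/
noncomputable def NeffP {N K : ℕ} (Vs : Fin K → Finset (Fin N)) (c : Fin N → ℝ) : ℝ :=
  (∑ k, ∑ j ∈ Vs k, c j) ^ 2 / (∑ k, ((Vs k).card : ℝ)⁻¹ * (∑ j ∈ Vs k, c j) ^ 2)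

theorem stmt_9 {N K L : ℕ} (hN : 1 ≤ N)
    (Vs : Fin K → Finset (Fin N)) (Ws : Fin L → Finset (Fin N))
    (hneV : ∀ k, (Vs k).Nonempty) (hneW : ∀ l, (Ws l).Nonempty)
    (hdisjV : ∀ k k', k ≠ k' → Disjoint (Vs k) (Vs k'))
    (hdisjW : ∀ l l', l ≠ l' → Disjoint (Ws l) (Ws l'))
    (hunion : Finset.univ.biUnion Vs = Finset.univ.biUnion Ws)
    (hrefine : ∀ k, ∃ l, Vs k ⊆ Ws l)
    (c : Fin N → ℝ) (hc : ∀ j, 0 < c j) :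
    NeffP Vs c ≤ NeffP Ws c := by
  classical
  rcases Nat.eq_zero_or_pos L with hL | hL
  · -- L = 0 : both partitions are empty
    subst hL
    haveI : IsEmpty (Fin K) := by
      constructor
      intro k
      obtain ⟨x, hx⟩ := hneV k
      have hx' : x ∈ Finset.univ.biUnion Ws := by
        rw [← hunion]; exact mem_biUnion.2 ⟨k, mem_univ k, hx⟩
      obtain ⟨l, _, _⟩ := mem_biUnion.1 hx'
      exact absurd l.isLt (by omega)
    simp [NeffP]
  · choose f hf using hrefine
    set s : Fin K → ℝ := fun k => ∑ j ∈ Vs k, c j with hs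
    have hspos : ∀ k, 0 < s k := fun k => Finset.sum_pos (fun j _ => hc j) (hneV k)
    -- each W_l is the disjoint union of the V_k in its fiber
    have hW : ∀ l, Ws l = (Finset.univ.filter (fun k => f k = l)).biUnion Vs := by
      intro l
      ext x
      simp only [mem_biUnion, mem_filter, mem_univ, true_and]
      constructor
      · intro hx
        have hx' : x ∈ Finset.univ.biUnion Vs := by
          rw [hunion]; exact mem_biUnion.2 ⟨l, mem_univ l, hx⟩
        obtain ⟨k, _, hk⟩ := mem_biUnion.1 hx'
        refine ⟨k, ?_, hk⟩
        by_contra hne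
        exact Finset.disjoint_left.1 (hdisjW (f k) l hne) (hf k hk) hx
      · rintro ⟨k, rfl, hk⟩
        exact hf k hk
    have hSl : ∀ l, ∑ j ∈ Ws l, c j = ∑ k ∈ Finset.univ.filter (fun k => f k = l), s k := by
      intro l
      rw [hW l, Finset.sum_biUnion (fun k _ k' _ hne => hdisjV k k' hne)]
    have hCl : ∀ l, ((Ws l).card : ℝ) =
        ∑ k ∈ Finset.univ.filter (fun k => f k = l), ((Vs k).card : ℝ) := by
      intro l
      rw [hW l, Finset.card_biUnion (fun k _ k' _ hne => hdisjV k k' hne)]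
      push_cast
      rfl
    -- numerators agree
    have hnum : ∑ k, s k = ∑ l, ∑ j ∈ Ws l, c j := by
      rw [← Finset.sum_fiberwise Finset.univ f s]
      exact Finset.sum_congr rfl fun l _ => (hSl l).symm
    -- denominators compare
    have hden : ∑ l, ((Ws l).card : ℝ)⁻¹ * (∑ j ∈ Ws l, c j) ^ 2 ≤
        ∑ k, ((Vs k).card : ℝ)⁻¹ * s k ^ 2 := by
      rw [← Finset.sum_fiberwise Finset.univ f (fun k => ((Vs k).card : ℝ)⁻¹ * s k ^ 2)]
      refine Finset.sum_le_sum fun l _ => ?_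
      rw [hSl l, hCl l]
      have := Finset.sq_sum_div_le_sum_sq_div (Finset.univ.filter (fun k => f k = l)) s
        (g := fun k => ((Vs k).card : ℝ)) (fun k _ => by
          show (0:ℝ) < ((Vs k).card : ℝ)
          exact_mod_cast (hneV k).card_pos)
      calc (∑ k ∈ Finset.univ.filter (fun k => f k = l), ((Vs k).card : ℝ))⁻¹ *
            (∑ k ∈ Finset.univ.filter (fun k => f k = l), s k) ^ 2
          = (∑ k ∈ Finset.univ.filter (fun k => f k = l), s k) ^ 2 /
            (∑ k ∈ Finset.univ.filter (fun k => f k = l), ((Vs k).card : ℝ)) := by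
            rw [inv_mul_eq_div]
        _ ≤ ∑ k ∈ Finset.univ.filter (fun k => f k = l), s k ^ 2 / ((Vs k).card : ℝ) := this
        _ = ∑ k ∈ Finset.univ.filter (fun k => f k = l), ((Vs k).card : ℝ)⁻¹ * s k ^ 2 := by
            refine Finset.sum_congr rfl fun k _ => ?_
            rw [div_eq_inv_mul]
    -- Ws denominator is positive
    have hWpos : 0 < ∑ l, ((Ws l).card : ℝ)⁻¹ * (∑ j ∈ Ws l, c j) ^ 2 := by
      refine Finset.sum_pos (fun l _ => ?_) ⟨⟨0, hL⟩, mem_univ _⟩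
      have h1 : (0:ℝ) < ((Ws l).card : ℝ) := by exact_mod_cast (hneW l).card_pos
      have h2 : (0:ℝ) < ∑ j ∈ Ws l, c j := Finset.sum_pos (fun j _ => hc j) (hneW l)
      positivity
    unfold NeffP
    rw [show (∑ k, ∑ j ∈ Vs k, c j) = ∑ k, s k from rfl, hnum]
    have h2 : (0:ℝ) ≤ (∑ l, ∑ j ∈ Ws l, c j) ^ 2 := sq_nonneg _
    exact div_le_div_of_nonneg_left h2 hWpos hden
end

section
/- Let P = {V_1,…,V_{2M}} be a collection of nonempty pairwise disjoint subsets of {1,…,N} with union V, all of the same cardinality, let c ∈ ℝ^N have strictly positive entries, and suppose the blocks are indexed so that ∑_{j∈V_1} c^j ≤ ∑_{j∈V_2} c^j ≤ ⋯ ≤ ∑_{j∈V_{2M}} c^j. Then the pairing P' = {V_1∪V_{2M}, V_2∪V_{2M−1}, …, V_M∪V_{M+1}} satisfies ρ(P',c) ≥ ρ(P'',c) for every pairing P'' of P; that is, P' maximizes ρ(·,c) over all pairings of P. -/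
open Finset

/-- The partition effective sample size `N^eff(Q, c)` for a collection `Q` of blocks. -/
noncomputable def NeffQ {N : ℕ} (Q : Finset (Finset (Fin N))) (c : Fin N → ℝ) : ℝ :=
  (∑ S ∈ Q, ∑ j ∈ S, c j) ^ 2 / (∑ S ∈ Q, ((S.card : ℝ))⁻¹ * (∑ j ∈ S, c j) ^ 2)

/-- `ρ(Q, c) = N^eff(Q, c) / |V|`, where `V` is the union of the blocks of `Q`. -/
noncomputable def rhoQ {N : ℕ} (Q : Finset (Finset (Fin N))) (c : Fin N → ℝ) : ℝ :=
  NeffQ Q c / (((Q.biUnion id).card : ℝ))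

/-!
Write a pairing as `{V k ∪ V (τ k)}` for a fixed-point-free involution `τ`, let `s k` be the
`c`-sum of `V k` and `m` the common block size. Every block of the pairing is counted twice
when summing over `k`, so the numerator of `N^eff` is `(∑ s k)²` and the union of the blocks is
`V` whatever `τ` is, while the denominator is `(∑ s k² + ∑ s k * s (τ k)) / (2m)`. Hence `ρ`
is largest when `∑ s k * s (τ k)` is smallest, which by the rearrangement inequality happens
when `τ` reverses the increasing order of the `s k`.
-/

open Function

variable {ι α : Type*} [DecidableEq α]

def pairBlocks [Fintype ι] (V : ι → Finset α) (τ : ι → ι) : Finset (Finset α) :=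
  univ.image fun k => V k ∪ V (τ k)

def blockSum (V : ι → Finset α) (c : α → ℝ) (k : ι) : ℝ :=
  ∑ j ∈ V k, c j

lemma biUnion_pairBlocks [Fintype ι] (V : ι → Finset α) (τ : ι → ι) :
    (pairBlocks V τ).biUnion id = univ.biUnion V := by
  ext x
  simp only [pairBlocks, mem_biUnion, mem_image, mem_univ, true_and, id, exists_exists_eq_and,
    mem_union]
  exact ⟨fun ⟨k, hk⟩ => hk.elim (fun h => ⟨k, h⟩) (fun h => ⟨τ k, h⟩),
    fun ⟨k, hk⟩ => ⟨k, .inl hk⟩⟩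

section Pairing

variable {V : ι → Finset α} {τ : ι → ι}

lemma union_comp_eq_union_comp_iff (hne : ∀ k, (V k).Nonempty) (hV : Pairwise (Disjoint on V))
    (hτ : Involutive τ) {k l : ι} :
    V k ∪ V (τ k) = V l ∪ V (τ l) ↔ k = l ∨ k = τ l := by
  refine ⟨fun h => ?_, ?_⟩
  · obtain ⟨x, hx⟩ := hne k
    have hxl : x ∈ V l ∪ V (τ l) := h ▸ mem_union_left _ hx
    rcases mem_union.1 hxl with hxl | hxl
    · exact .inl (by_contra fun hkl => disjoint_left.1 (hV hkl) hx hxl)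
    · exact .inr (by_contra fun hkl => disjoint_left.1 (hV hkl) hx hxl)
  · rintro (rfl | rfl)
    · rfl
    · rw [hτ l, union_comm]

lemma card_filter_union_comp_eq_two [Fintype ι] [DecidableEq ι] (hne : ∀ k, (V k).Nonempty)
    (hV : Pairwise (Disjoint on V)) (hτ : Involutive τ) (hfix : ∀ k, τ k ≠ k) (l : ι) :
    #{k | V k ∪ V (τ k) = V l ∪ V (τ l)} = 2 := by
  have hfiber : ({k | V k ∪ V (τ k) = V l ∪ V (τ l)} : Finset ι) = {l, τ l} := by
    ext k
    simp [union_comp_eq_union_comp_iff hne hV hτ]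
  rw [hfiber, card_pair (hfix l).symm]

lemma sum_union_comp_eq_two_nsmul_sum_pairBlocks [Fintype ι] {β : Type*} [AddCommMonoid β]
    (hne : ∀ k, (V k).Nonempty) (hV : Pairwise (Disjoint on V)) (hτ : Involutive τ)
    (hfix : ∀ k, τ k ≠ k) (g : Finset α → β) :
    ∑ k, g (V k ∪ V (τ k)) = 2 • ∑ S ∈ pairBlocks V τ, g S := by
  classical
  rw [sum_comp, pairBlocks, smul_sum]
  refine sum_congr rfl fun S hS => ?_
  obtain ⟨l, -, rfl⟩ := mem_image.1 hS
  rw [card_filter_union_comp_eq_two hne hV hτ hfix]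

end Pairing

lemma NeffQ_pairBlocks [Fintype ι] {N : ℕ} {V : ι → Finset (Fin N)} {τ : ι → ι}
    (hne : ∀ k, (V k).Nonempty) (hV : Pairwise (Disjoint on V)) (hτ : Involutive τ)
    (hfix : ∀ k, τ k ≠ k) {m : ℕ} (hm : ∀ k, (V k).card = m) (c : Fin N → ℝ) :
    NeffQ (pairBlocks V τ) c = 2 * m * (∑ k, blockSum V c k) ^ 2 /
      (∑ k, blockSum V c k ^ 2 + ∑ k, blockSum V c k * blockSum V c (τ k)) := by
  set s := blockSum V c
  have hsum : ∀ k, ∑ j ∈ V k ∪ V (τ k), c j = s k + s (τ k) :=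
    fun k => sum_union (hV (hfix k).symm)
  have hcard : ∀ k, ((V k ∪ V (τ k)).card : ℝ) = 2 * m := fun k => by
    rw [card_union_of_disjoint (hV (hfix k).symm), hm, hm]
    push_cast
    ring
  have hnum : ∑ S ∈ pairBlocks V τ, ∑ j ∈ S, c j = ∑ k, s k := by
    have := sum_union_comp_eq_two_nsmul_sum_pairBlocks hne hV hτ hfix fun S => ∑ j ∈ S, c j
    simp only [hsum, sum_add_distrib, hτ.bijective.sum_comp s, nsmul_eq_mul,
      Nat.cast_ofNat] at this
    linarith
  have hden : ∑ S ∈ pairBlocks V τ, ((S.card : ℝ))⁻¹ * (∑ j ∈ S, c j) ^ 2 =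
      (∑ k, s k ^ 2 + ∑ k, s k * s (τ k)) / (2 * m) := by
    have := sum_union_comp_eq_two_nsmul_sum_pairBlocks hne hV hτ hfix
      fun S => ((S.card : ℝ))⁻¹ * (∑ j ∈ S, c j) ^ 2
    simp only [hsum, hcard, add_sq, mul_assoc (2 : ℝ), ← mul_sum, sum_add_distrib,
      hτ.bijective.sum_comp fun k => s k ^ 2, nsmul_eq_mul, Nat.cast_ofNat] at this
    rw [div_eq_inv_mul]
    linear_combination -this / 2
  rw [NeffQ, hnum, hden, div_div_eq_mul_div]
  ring

lemma sum_mul_comp_rev_le_sum_mul_comp_perm {R : Type*} [Semiring R] [LinearOrder R]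
    [IsStrictOrderedRing R] [ExistsAddOfLE R] {n : ℕ} {s : Fin n → R} (hs : Monotone s)
    (σ : Equiv.Perm (Fin n)) :
    ∑ k, s k * s k.rev ≤ ∑ k, s k * s (σ k) := by
  simpa using (hs.antivary (hs.comp_antitone Fin.rev_anti)).sum_mul_le_sum_mul_comp_perm
    (σ := σ.trans Fin.revPerm)

lemma Fin.rev_ne_self_of_two_mul {M : ℕ} (k : Fin (2 * M)) : k.rev ≠ k := by
  intro h
  have := congrArg Fin.val h
  rw [Fin.val_rev] at this
  omega

theorem stmt_12_general {N M : ℕ} (hM : 1 ≤ M)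
    (Vs : Fin (2 * M) → Finset (Fin N))
    (hne : ∀ k, (Vs k).Nonempty)
    (hdisj : ∀ k l, k ≠ l → Disjoint (Vs k) (Vs l))
    (hcard : ∀ k l, (Vs k).card = (Vs l).card)
    (c : Fin N → ℝ) (hc : ∀ j, 0 < c j)
    (hsorted : ∀ k l : Fin (2 * M), k ≤ l → ∑ j ∈ Vs k, c j ≤ ∑ j ∈ Vs l, c j)
    (σ : Equiv.Perm (Fin (2 * M))) (hinv : ∀ k, σ (σ k) = k) (hnfp : ∀ k, σ k ≠ k) :
    rhoQ (Finset.image (fun k => Vs k ∪ Vs (σ k)) Finset.univ) c ≤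
      rhoQ (Finset.image (fun k => Vs k ∪ Vs (Fin.rev k)) Finset.univ) c := by
  have hV : Pairwise (Disjoint on Vs) := fun k l => hdisj k l
  set s := blockSum Vs c
  have hs : Monotone s := fun k l => hsorted k l
  have hspos : ∀ k, 0 < s k := fun k => sum_pos (fun j _ => hc j) (hne k)
  let k₀ : Fin (2 * M) := ⟨0, by omega⟩
  have hm : ∀ k, (Vs k).card = (Vs k₀).card := fun k => hcard k k₀
  have hden_pos : 0 < ∑ k, s k ^ 2 + ∑ k, s k * s k.rev :=
    add_pos (sum_pos (fun k _ => pow_pos (hspos k) 2) ⟨k₀, mem_univ _⟩)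
      (sum_pos (fun k _ => mul_pos (hspos k) (hspos _)) ⟨k₀, mem_univ _⟩)
  change rhoQ (pairBlocks Vs σ) c ≤ rhoQ (pairBlocks Vs Fin.rev) c
  rw [rhoQ, rhoQ, biUnion_pairBlocks, biUnion_pairBlocks, NeffQ_pairBlocks hne hV hinv hnfp hm,
    NeffQ_pairBlocks hne hV Fin.rev_involutive Fin.rev_ne_self_of_two_mul hm]
  gcongr _ / (_ + ?_) / _
  exact sum_mul_comp_rev_le_sum_mul_comp_perm hs σ

/-- Any pairing of the blocks `V_1, …, V_{2M}` is described by a fixed-point-free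
involution `σ` of the index set, the pairing being `{V_k ∪ V_{σ k} : k}`.  With the
blocks sorted in increasing order of their `c`-sums, the antithetic pairing
(given by `σ = Fin.rev`, pairing the smallest with the largest, and so on)
maximizes `ρ(·, c)` over all pairings. -/
theorem stmt_12 {N M : ℕ} (hN : 1 ≤ N) (hM : 1 ≤ M)
    (Vs : Fin (2 * M) → Finset (Fin N))
    (hne : ∀ k, (Vs k).Nonempty)
    (hdisj : ∀ k l, k ≠ l → Disjoint (Vs k) (Vs l))
    (hcard : ∀ k l, (Vs k).card = (Vs l).card)
    (c : Fin N → ℝ) (hc : ∀ j, 0 < c j)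
    (hsorted : ∀ k l : Fin (2 * M), k ≤ l → ∑ j ∈ Vs k, c j ≤ ∑ j ∈ Vs l, c j)
    (σ : Equiv.Perm (Fin (2 * M))) (hinv : ∀ k, σ (σ k) = k) (hnfp : ∀ k, σ k ≠ k) :
    rhoQ (Finset.image (fun k => Vs k ∪ Vs (σ k)) Finset.univ) c ≤
      rhoQ (Finset.image (fun k => Vs k ∪ Vs (Fin.rev k)) Finset.univ) c :=
  stmt_12_general hM Vs hne hdisj hcard c hc hsorted σ hinv hnfp
end

section
/- Let M ≥ 1 and let x_1 ≤ x_2 ≤ ⋯ ≤ x_{2M} be real numbers. For every partition of the index set {1,…,2M} into M pairs {k_1,l_1},…,{k_M,l_M}, one has ∑_{i=1}^M (x_i + x_{2M+1−i})² ≤ ∑_{i=1}^M (x_{k_i} + x_{l_i})²; that is, the antithetic matching (pairing smallest with largest, second smallest with second largest, and so on) minimizes the sum of squared pair sums over all perfect matchings of the indices. -/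
open Finset

private lemma double_sum {n : ℕ} (τ : Equiv.Perm (Fin n)) (hinv : ∀ i, τ (τ i) = i)
    (hnfp : ∀ i, τ i ≠ i) (F : Fin n → ℝ) (hF : ∀ i, F (τ i) = F i) :
    2 * ∑ i ∈ Finset.univ.filter (fun i : Fin n => (i : ℕ) < ((τ i : Fin n) : ℕ)), F i
      = ∑ i, F i := by
  have hsplit := Finset.sum_filter_add_sum_filter_not Finset.univ
    (fun i : Fin n => (i : ℕ) < ((τ i : Fin n) : ℕ)) F
  have hswap : ∑ i ∈ Finset.univ.filter (fun i : Fin n => ¬ (i : ℕ) < ((τ i : Fin n) : ℕ)), F i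
      = ∑ i ∈ Finset.univ.filter (fun i : Fin n => (i : ℕ) < ((τ i : Fin n) : ℕ)), F i := by
    refine Finset.sum_nbij' (fun i => τ i) (fun i => τ i) ?_ ?_ ?_ ?_ ?_
    · intro i hi
      simp only [Finset.mem_filter, Finset.mem_univ, true_and, not_lt] at hi ⊢
      have hne : ((τ i : Fin n) : ℕ) ≠ (i : ℕ) := fun h => hnfp i (Fin.val_injective h)
      rw [hinv]
      omega
    · intro i hi
      simp only [Finset.mem_filter, Finset.mem_univ, true_and, not_lt] at hi ⊢
      rw [hinv]
      omega
    · intro i _; exact hinv i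
    · intro i _; exact hinv i
    · intro i _; exact (hF i).symm
  linarith [hsplit]

/-- A perfect matching of `{1, …, 2M}` is described by a fixed-point-free involution
`σ`; each pair `{i, σ i}` is represented exactly once by its endpoint `i` with
`i < σ i`.  For monotone `x`, the antithetic matching (pairing the smallest entry
with the largest, the second smallest with the second largest, and so on, i.e.
`i ↦ Fin.rev i`, whose representatives are the indices `i < M`) minimizes the sum
of the squared pair sums over all perfect matchings. -/
theorem stmt_13 {M : ℕ} (hM : 1 ≤ M) (x : Fin (2 * M) → ℝ) (hx : Monotone x)
    (σ : Equiv.Perm (Fin (2 * M))) (hinv : ∀ i, σ (σ i) = i) (hnfp : ∀ i, σ i ≠ i) :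
    ∑ i ∈ Finset.univ.filter (fun i : Fin (2 * M) => (i : ℕ) < M),
        (x i + x (Fin.rev i)) ^ 2
      ≤ ∑ i ∈ Finset.univ.filter (fun i : Fin (2 * M) => (i : ℕ) < ((σ i : Fin (2 * M)) : ℕ)),
          (x i + x (σ i)) ^ 2 := by
  -- rev as a permutation
  set ρ : Equiv.Perm (Fin (2 * M)) := Fin.revPerm with hρ
  have hρapp : ∀ i : Fin (2 * M), ρ i = Fin.rev i := fun i => rfl
  have hρinv : ∀ i : Fin (2 * M), ρ (ρ i) = i := fun i => Fin.rev_rev i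
  have hρnfp : ∀ i : Fin (2 * M), ρ i ≠ i := by
    intro i h
    have hv : ((ρ i : Fin (2 * M)) : ℕ) = (i : ℕ) := congrArg Fin.val h
    have : ((ρ i : Fin (2 * M)) : ℕ) = 2 * M - ((i : ℕ) + 1) := Fin.val_rev i
    have := i.is_lt
    omega
  -- the filter for the antithetic matching
  have hfilter : (Finset.univ.filter (fun i : Fin (2 * M) => (i : ℕ) < M))
      = Finset.univ.filter (fun i : Fin (2 * M) => (i : ℕ) < ((ρ i : Fin (2 * M)) : ℕ)) := by
    apply Finset.filter_congr
    intro i _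
    have hv : ((ρ i : Fin (2 * M)) : ℕ) = 2 * M - ((i : ℕ) + 1) := Fin.val_rev i
    have := i.is_lt
    omega
  have hdoubL := double_sum ρ hρinv hρnfp (fun i => (x i + x (ρ i)) ^ 2)
    (fun i => by
      show (x (ρ i) + x (ρ (ρ i))) ^ 2 = (x i + x (ρ i)) ^ 2
      rw [hρinv]; ring)
  have hdoubR := double_sum σ hinv hnfp (fun i => (x i + x (σ i)) ^ 2)
    (fun i => by
      show (x (σ i) + x (σ (σ i))) ^ 2 = (x i + x (σ i)) ^ 2
      rw [hinv]; ring)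
  -- sums of squares are permutation invariant
  have hsqρ : ∑ i, x (ρ i) ^ 2 = ∑ i, x i ^ 2 := Equiv.sum_comp ρ (fun i => x i ^ 2)
  have hsqσ : ∑ i, x (σ i) ^ 2 = ∑ i, x i ^ 2 := Equiv.sum_comp σ (fun i => x i ^ 2)
  -- rearrangement inequality
  have hanti : Antivary x (fun i => x (Fin.rev i)) := by
    refine hx.antivary ?_
    intro i j hij
    exact hx (Fin.rev_le_rev.2 hij)
  have hre : ∑ i, x i * x (Fin.rev i) ≤ ∑ i, x i * x (σ i) := by
    have h := hanti.sum_mul_le_sum_mul_comp_perm (σ := σ.trans ρ)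
    simpa [hρapp, Fin.rev_rev] using h
  have hexpL : ∑ i, (x i + x (ρ i)) ^ 2
      = 2 * ∑ i, x i ^ 2 + 2 * ∑ i, x i * x (Fin.rev i) := by
    have : ∀ i : Fin (2 * M), (x i + x (ρ i)) ^ 2
        = x i ^ 2 + x (ρ i) ^ 2 + 2 * (x i * x (Fin.rev i)) := by
      intro i; rw [hρapp]; ring
    rw [Finset.sum_congr rfl (fun i _ => this i), Finset.sum_add_distrib,
      Finset.sum_add_distrib, hsqρ, ← Finset.mul_sum]
    ring
  have hexpR : ∑ i, (x i + x (σ i)) ^ 2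
      = 2 * ∑ i, x i ^ 2 + 2 * ∑ i, x i * x (σ i) := by
    have : ∀ i : Fin (2 * M), (x i + x (σ i)) ^ 2
        = x i ^ 2 + x (σ i) ^ 2 + 2 * (x i * x (σ i)) := by
      intro i; ring
    rw [Finset.sum_congr rfl (fun i _ => this i), Finset.sum_add_distrib,
      Finset.sum_add_distrib, hsqσ, ← Finset.mul_sum]
    ring
  have hL : ∑ i ∈ Finset.univ.filter (fun i : Fin (2 * M) => (i : ℕ) < M),
      (x i + x (Fin.rev i)) ^ 2
      = ∑ i ∈ Finset.univ.filter (fun i : Fin (2 * M) => (i : ℕ) < ((ρ i : Fin (2 * M)) : ℕ)),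
          (x i + x (ρ i)) ^ 2 := by
    rw [hfilter]
    rfl
  rw [hL]
  nlinarith [hdoubL, hdoubR, hexpL, hexpR, hre]
end

section
/- Let K ≥ 2, let P = {V_1,…,V_K} be a collection of nonempty pairwise disjoint subsets of {1,…,N} with union V, and let c ∈ ℝ^N have strictly positive entries. Write m_k = |V_k| and x_k = ∑_{j∈V_k} c^j, and for distinct k,l define the expression e(k,l) := (m_k m_l/(m_k+m_l))·(x_k/m_k − x_l/m_l)². Then for all pairs of distinct indices (k,l) and (k',l'): ρ(P_{k,l},c) ≥ ρ(P_{k',l'},c) if and only if e(k,l) ≥ e(k',l'). In particular, a pair (k,l) maximizes ρ(P_{k,l},c) over all pairs of distinct indices if and only if it maximizes e(k,l). -/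
open Finset

/-- The coarsening `P_{k,l}` of `P = {V_1, …, V_K}`: the blocks `V_k` and `V_l` are
replaced by their union, all other blocks are unchanged. -/
def coarsen {N K : ℕ} (Vs : Fin K → Finset (Fin N)) (k l : Fin K) :
    Finset (Finset (Fin N)) :=
  (Finset.image Vs Finset.univ \ {Vs k, Vs l}) ∪ {Vs k ∪ Vs l}

/-- The expression `e(k,l) = (m_k m_l/(m_k+m_l)) (x_k/m_k − x_l/m_l)²` with
`m_k = |V_k|` and `x_k = ∑_{j ∈ V_k} c_j`. -/
noncomputable def eExpr {N K : ℕ} (Vs : Fin K → Finset (Fin N)) (c : Fin N → ℝ)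
    (k l : Fin K) : ℝ :=
  (((Vs k).card : ℝ) * ((Vs l).card : ℝ) / (((Vs k).card : ℝ) + ((Vs l).card : ℝ))) *
    ((∑ j ∈ Vs k, c j) / ((Vs k).card : ℝ) - (∑ j ∈ Vs l, c j) / ((Vs l).card : ℝ)) ^ 2

section Aux

variable {N K : ℕ} {Vs : Fin K → Finset (Fin N)}

lemma aux_inj (hne : ∀ k, (Vs k).Nonempty)
    (hdisj : ∀ k l, k ≠ l → Disjoint (Vs k) (Vs l)) : Function.Injective Vs := by
  intro a b hab
  by_contra h
  have := hdisj a b h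
  rw [hab, disjoint_self] at this
  exact (hne b).ne_empty this

lemma aux_notmem (hne : ∀ k, (Vs k).Nonempty)
    (hdisj : ∀ k l, k ≠ l → Disjoint (Vs k) (Vs l)) (k l : Fin K) :
    Vs k ∪ Vs l ∉ Finset.image Vs Finset.univ \ {Vs k, Vs l} := by
  intro h
  rw [Finset.mem_sdiff, Finset.mem_image] at h
  obtain ⟨⟨m, -, hm⟩, hm2⟩ := h
  simp only [Finset.mem_insert, Finset.mem_singleton, not_or] at hm2
  have hmk : m ≠ k := by rintro rfl; exact hm2.1 hm.symm
  have hsub : Vs k ⊆ Vs m := hm ▸ Finset.subset_union_left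
  have := (hdisj m k hmk).symm.eq_bot_of_le hsub
  exact (hne k).ne_empty this

lemma sum_coarsen (hne : ∀ k, (Vs k).Nonempty)
    (hdisj : ∀ k l, k ≠ l → Disjoint (Vs k) (Vs l)) (k l : Fin K) (hkl : k ≠ l)
    (f : Finset (Fin N) → ℝ) :
    ∑ S ∈ coarsen Vs k l, f S
      = (∑ m, f (Vs m)) - f (Vs k) - f (Vs l) + f (Vs k ∪ Vs l) := by
  have hinj := aux_inj hne hdisj
  rw [coarsen, Finset.sum_union (Finset.disjoint_singleton_right.mpr
    (aux_notmem hne hdisj k l)), Finset.sum_singleton]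
  congr 1
  have himg : Finset.image Vs Finset.univ \ {Vs k, Vs l}
      = Finset.image Vs (Finset.univ \ {k, l}) := by
    rw [Finset.image_sdiff _ _ hinj, Finset.image_insert, Finset.image_singleton]
  rw [himg, Finset.sum_image (fun a _ b _ h => hinj h),
    Finset.sum_sdiff_eq_sub (Finset.subset_univ _),
    Finset.sum_pair hkl]
  ring

lemma biUnion_coarsen (hne : ∀ k, (Vs k).Nonempty)
    (hdisj : ∀ k l, k ≠ l → Disjoint (Vs k) (Vs l)) (k l : Fin K) :
    (coarsen Vs k l).biUnion id = Finset.univ.biUnion Vs := by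
  ext a
  simp only [coarsen, Finset.mem_biUnion, Finset.mem_union, Finset.mem_sdiff,
    Finset.mem_image, Finset.mem_singleton, Finset.mem_insert, id, Finset.mem_univ,
    true_and]
  constructor
  · rintro ⟨S, hS, ha⟩
    rcases hS with ⟨⟨m, hm⟩, -⟩ | hS
    · exact ⟨m, hm ▸ ha⟩
    · rw [hS] at ha
      rcases Finset.mem_union.mp ha with h | h
      · exact ⟨k, h⟩
      · exact ⟨l, h⟩
  · rintro ⟨m, ha⟩
    by_cases hmk : m = k
    · exact ⟨Vs k ∪ Vs l, Or.inr rfl, Finset.mem_union_left _ (hmk ▸ ha)⟩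
    by_cases hml : m = l
    · exact ⟨Vs k ∪ Vs l, Or.inr rfl, Finset.mem_union_right _ (hml ▸ ha)⟩
    refine ⟨Vs m, Or.inl ⟨⟨m, rfl⟩, ?_⟩, ha⟩
    simp only [not_or]
    exact ⟨fun h => hmk (aux_inj hne hdisj h), fun h => hml (aux_inj hne hdisj h)⟩

lemma aux_main {c : Fin N → ℝ} (hne : ∀ k, (Vs k).Nonempty)
    (hdisj : ∀ k l, k ≠ l → Disjoint (Vs k) (Vs l))
    (hc : ∀ j, 0 < c j) (k l : Fin K) (hkl : k ≠ l) :
    rhoQ (coarsen Vs k l) c =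
      (∑ m, ∑ j ∈ Vs m, c j) ^ 2 /
        (((∑ m, (((Vs m).card : ℝ))⁻¹ * (∑ j ∈ Vs m, c j) ^ 2) - eExpr Vs c k l) *
          ((Finset.univ.biUnion Vs).card : ℝ)) ∧
    eExpr Vs c k l < ∑ m, (((Vs m).card : ℝ))⁻¹ * (∑ j ∈ Vs m, c j) ^ 2 := by
  have hcardk : (0:ℝ) < ((Vs k).card : ℝ) := by
    exact_mod_cast Finset.card_pos.mpr (hne k)
  have hcardl : (0:ℝ) < ((Vs l).card : ℝ) := by
    exact_mod_cast Finset.card_pos.mpr (hne l)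
  have hsum_union : ∑ j ∈ Vs k ∪ Vs l, c j = (∑ j ∈ Vs k, c j) + ∑ j ∈ Vs l, c j :=
    Finset.sum_union (hdisj k l hkl)
  have hcard_union : ((Vs k ∪ Vs l).card : ℝ) = ((Vs k).card : ℝ) + ((Vs l).card : ℝ) := by
    exact_mod_cast congrArg Nat.cast (Finset.card_union_of_disjoint (hdisj k l hkl))
  -- numerator
  have hnum : ∑ S ∈ coarsen Vs k l, ∑ j ∈ S, c j = ∑ m, ∑ j ∈ Vs m, c j := by
    rw [sum_coarsen hne hdisj k l hkl (fun S => ∑ j ∈ S, c j), hsum_union]; ring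
  -- denominator
  have hden : ∑ S ∈ coarsen Vs k l, ((S.card : ℝ))⁻¹ * (∑ j ∈ S, c j) ^ 2
      = (∑ m, (((Vs m).card : ℝ))⁻¹ * (∑ j ∈ Vs m, c j) ^ 2) - eExpr Vs c k l := by
    rw [sum_coarsen hne hdisj k l hkl (fun S => ((S.card : ℝ))⁻¹ * (∑ j ∈ S, c j) ^ 2)]
    simp only [hsum_union, hcard_union, eExpr]
    field_simp
    ring
  -- positivity of the coarsened denominator
  have hpos : 0 < ∑ S ∈ coarsen Vs k l, ((S.card : ℝ))⁻¹ * (∑ j ∈ S, c j) ^ 2 := by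
    apply Finset.sum_pos
    · intro S hS
      have hSne : S.Nonempty := by
        rcases Finset.mem_union.mp hS with h | h
        · obtain ⟨hmem, -⟩ := Finset.mem_sdiff.mp h
          obtain ⟨m, -, hm⟩ := Finset.mem_image.mp hmem
          exact hm ▸ hne m
        · rw [Finset.mem_singleton.mp h]
          exact (hne k).mono Finset.subset_union_left
      have h1 : (0:ℝ) < (S.card : ℝ) := by exact_mod_cast Finset.card_pos.mpr hSne
      have h2 : (0:ℝ) < ∑ j ∈ S, c j := Finset.sum_pos (fun j _ => hc j) hSne
      positivity
    · exact ⟨Vs k ∪ Vs l, Finset.mem_union_right _ (Finset.mem_singleton_self _)⟩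
  constructor
  · rw [rhoQ, NeffQ, hnum, hden, biUnion_coarsen hne hdisj k l, div_div]
  · rw [hden] at hpos; linarith

end Aux

theorem stmt_14 {N K : ℕ} (hN : 1 ≤ N) (hK : 2 ≤ K)
    (Vs : Fin K → Finset (Fin N))
    (hne : ∀ k, (Vs k).Nonempty)
    (hdisj : ∀ k l, k ≠ l → Disjoint (Vs k) (Vs l))
    (c : Fin N → ℝ) (hc : ∀ j, 0 < c j)
    (k l k' l' : Fin K) (hkl : k ≠ l) (hkl' : k' ≠ l') :
    rhoQ (coarsen Vs k' l') c ≤ rhoQ (coarsen Vs k l) c ↔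
      eExpr Vs c k' l' ≤ eExpr Vs c k l := by
  obtain ⟨hrho, hlt⟩ := aux_main hne hdisj hc k l hkl
  obtain ⟨hrho', hlt'⟩ := aux_main hne hdisj hc k' l' hkl'
  haveI : NeZero K := ⟨by omega⟩
  have hS : (0:ℝ) < ∑ m, ∑ j ∈ Vs m, c j :=
    Finset.sum_pos (fun m _ => Finset.sum_pos (fun j _ => hc j) (hne m)) Finset.univ_nonempty
  have hV : (0:ℝ) < ((Finset.univ.biUnion Vs).card : ℝ) := by
    have : (Finset.univ.biUnion Vs).Nonempty := by
      obtain ⟨j, hj⟩ := hne k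
      exact ⟨j, Finset.mem_biUnion.mpr ⟨k, Finset.mem_univ _, hj⟩⟩
    exact_mod_cast Finset.card_pos.mpr this
  set T := ∑ m, (((Vs m).card : ℝ))⁻¹ * (∑ j ∈ Vs m, c j) ^ 2 with hT
  rw [hrho, hrho', div_le_div_iff₀ (by nlinarith) (by nlinarith)]
  constructor
  · intro h; nlinarith [mul_pos (pow_pos hS 2) hV]
  · intro h; nlinarith [mul_pos (pow_pos hS 2) hV]
end
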